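/- arXiv:2508.08150 — 2 statements merged into one kernel-verified Lean document; each statement's English description precedes it below -/
import Mathlib

section
/- If $X \subseteq \mathbb{R}^d$ contains a point $x$ with lower porosity $\underline{\mathrm{por}}(X, x) = 0$ realized along a sequence of scales in a suitably uniform way (specifically: for every $\epsilon > 0$ and every scale ratio, there are scales $r$ at which every hole in $B(x,r) \setminus X$ has radius at most $\epsilon r$), then $\dim_A X = d$. -/
/-!
A grid of `⌈R/r⌉ ^ d` cubes covers any `R`-ball, so `dim_A X ≤ d`. Conversely, fix
`s < d`. At a scale `r` where every hole of `B(x,r) \ X` has radius at most `εr`, every point of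
`B(x, (1 - 2ε) r)` lies within `2εr` of `B(x,r) ∩ X`, so inflating an optimal `εr`-cover of
`B(x,r) ∩ X` by `2εr` covers `B(x, (1 - 2ε) r)`. Comparing volumes gives
`N(B(x,r) ∩ X, εr) ≥ (6ε)⁻ᵈ`, which for small `ε` beats the bound `C ε⁻ˢ` that an Assouad
exponent `s` would impose.
-/

open MeasureTheory Filter

noncomputable section

/-- Minimal number of closed balls of radius `r` needed to cover `X`. -/
def coverN {α : Type*} [PseudoMetricSpace α] (X : Set α) (r : ℝ) : ℕ :=
  sInf {n : ℕ | ∃ S : Finset α, S.card ≤ n ∧ X ⊆ ⋃ x ∈ S, Metric.closedBall x r}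

/-- Assouad dimension. -/
def assouadDim {α : Type*} [PseudoMetricSpace α] (X : Set α) : ℝ :=
  sInf {s : ℝ | ∃ C > (0 : ℝ), ∀ x ∈ X, ∀ R r : ℝ, 0 < r → r < R →
    ((coverN (Metric.ball x R ∩ X) r : ℝ) ≤ C * (R / r) ^ s)}

open Metric Topology

section Covering

variable {α : Type*} [PseudoMetricSpace α]

lemma coverN_le_card {X : Set α} {r : ℝ} {S : Finset α}
    (h : X ⊆ ⋃ c ∈ S, closedBall c r) : coverN X r ≤ S.card :=
  Nat.sInf_le ⟨S, le_rfl, h⟩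

lemma exists_finset_card_le_coverN {X : Set α} {r : ℝ}
    (h : ∃ S : Finset α, X ⊆ ⋃ c ∈ S, closedBall c r) :
    ∃ S : Finset α, S.card ≤ coverN X r ∧ X ⊆ ⋃ c ∈ S, closedBall c r := by
  obtain ⟨S, hS⟩ := h
  have hne : {n : ℕ | ∃ S : Finset α, S.card ≤ n ∧ X ⊆ ⋃ c ∈ S, closedBall c r}.Nonempty :=
    ⟨S.card, S, le_rfl, hS⟩
  exact Nat.sInf_mem hne

def IsAssouadExponent (X : Set α) (s : ℝ) : Prop :=
  ∃ C > (0 : ℝ), ∀ x ∈ X, ∀ R r : ℝ, 0 < r → r < R →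
    ((coverN (ball x R ∩ X) r : ℝ) ≤ C * (R / r) ^ s)

lemma assouadDim_eq_sInf (X : Set α) : assouadDim X = sInf {s | IsAssouadExponent X s} := rfl

/-- `HoleRadiusLE X x r h` says `por(X, x, r) ≤ h`. -/
def HoleRadiusLE (X : Set α) (x : α) (r h : ℝ) : Prop :=
  ∀ (y : α) (ρ : ℝ), 0 < ρ → ball y ρ ⊆ ball x r \ X → ρ ≤ h

lemma HoleRadiusLE.exists_mem_ball {X : Set α} {x : α} {r h : ℝ} (hX : HoleRadiusLE X x r h)
    {y : α} {ρ : ℝ} (hρ : h < ρ) (hρ0 : 0 < ρ) (hy : ball y ρ ⊆ ball x r) :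
    ∃ p ∈ ball y ρ, p ∈ X := by
  by_contra! hdisj
  exact hρ.not_ge (hX y ρ hρ0 fun p hp => ⟨hy hp, hdisj p hp⟩)

lemma HoleRadiusLE.ball_subset_biUnion {X : Set α} {x : α} {r h ρ δ : ℝ}
    (hX : HoleRadiusLE X x r h) (hρ : h < ρ) (hρ0 : 0 < ρ) {S : Finset α}
    (hS : ball x r ∩ X ⊆ ⋃ c ∈ S, closedBall c δ) :
    ball x (r - ρ) ⊆ ⋃ c ∈ S, closedBall c (ρ + δ) := by
  intro z hz
  have hball : ball z ρ ⊆ ball x r := ball_subset_ball' (by linarith [mem_ball.1 hz])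
  obtain ⟨p, hpz, hpX⟩ := hX.exists_mem_ball hρ hρ0 hball
  obtain ⟨c, hcS, hpc⟩ := Set.mem_iUnion₂.1 (hS ⟨hball hpz, hpX⟩)
  refine Set.mem_iUnion₂.2 ⟨c, hcS, mem_closedBall.2 ?_⟩
  calc dist z c ≤ dist z p + dist p c := dist_triangle _ _ _
    _ ≤ ρ + δ := add_le_add (mem_ball'.1 hpz).le (mem_closedBall.1 hpc)

end Covering

section Euclidean

variable {ι : Type*} [Fintype ι]

lemma exists_lt_ceil_abs_sub_le {R r u : ℝ} (hr : 0 < r) (hu0 : 0 ≤ u) (huR : u < 2 * R) :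
    ∃ k < ⌈R / r⌉₊, |u - (2 * k + 1) * r| ≤ r := by
  have h2r : 0 < 2 * r := by positivity
  have hu : 0 ≤ u / (2 * r) := div_nonneg hu0 h2r.le
  refine ⟨⌊u / (2 * r)⌋₊, ?_, ?_⟩
  · refine Nat.cast_lt.1 (((Nat.floor_le hu).trans_lt ?_).trans_le (Nat.le_ceil _))
    rw [div_lt_div_iff₀ h2r hr]
    nlinarith
  · have hlo := Nat.floor_le hu
    have hhi := Nat.lt_floor_add_one (u / (2 * r))
    rw [le_div_iff₀ h2r] at hlo
    rw [div_lt_iff₀ h2r] at hhi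
    rw [abs_le]
    constructor <;> nlinarith

lemma exists_finset_card_le_ceil_pow_cover_ball (x : ι → ℝ) {R r : ℝ}
    (hr : 0 < r) : ∃ S : Finset (ι → ℝ), S.card ≤ ⌈R / r⌉₊ ^ Fintype.card ι ∧
      ball x R ⊆ ⋃ c ∈ S, closedBall c r := by
  classical
  set N := ⌈R / r⌉₊
  let center : (ι → Fin N) → ι → ℝ := fun k i => x i - R + (2 * (k i : ℕ) + 1) * r
  refine ⟨Finset.univ.image center, Finset.card_image_le.trans (by simp), ?_⟩
  intro y hy
  have hk : ∀ i, ∃ k < N, |(y i - x i + R) - (2 * k + 1) * r| ≤ r := fun i => by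
    have := abs_lt.1 ((dist_le_pi_dist y x i).trans_lt (mem_ball.1 hy))
    exact exists_lt_ceil_abs_sub_le hr (by linarith) (by linarith)
  choose k hkN hky using hk
  refine Set.mem_iUnion₂.2 ⟨center fun i => ⟨k i, hkN i⟩, Finset.mem_image_of_mem _ (by simp),
    mem_closedBall.2 ((dist_pi_le_iff hr.le).2 fun i => ?_)⟩
  rw [Real.dist_eq]
  convert hky i using 2
  ring

lemma pow_card_le_card_mul_pow_of_ball_subset {x : ι → ℝ} {R ρ : ℝ} (hR : 0 < R) (hρ : 0 ≤ ρ)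
    {S : Finset (ι → ℝ)} (h : ball x R ⊆ ⋃ c ∈ S, closedBall c ρ) :
    R ^ Fintype.card ι ≤ S.card * ρ ^ Fintype.card ι := by
  set n := Fintype.card ι
  have hvol : ENNReal.ofReal ((2 * R) ^ n) ≤ S.card * ENNReal.ofReal ((2 * ρ) ^ n) :=
    calc ENNReal.ofReal ((2 * R) ^ n) = volume (ball x R) := (Real.volume_pi_ball x hR).symm
      _ ≤ volume (⋃ c ∈ S, closedBall c ρ) := measure_mono h
      _ ≤ ∑ c ∈ S, volume (closedBall c ρ) := measure_biUnion_finset_le _ _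
      _ = S.card * ENNReal.ofReal ((2 * ρ) ^ n) := by
        simp [Real.volume_pi_closedBall _ hρ, n]
  rw [← ENNReal.ofReal_natCast, ← ENNReal.ofReal_mul (by positivity),
    ENNReal.ofReal_le_ofReal_iff (by positivity), mul_pow, mul_pow] at hvol
  have h2 : (0 : ℝ) < 2 ^ n := by positivity
  nlinarith

lemma coverN_ball_inter_le (X : Set (ι → ℝ)) (x : ι → ℝ) {R r : ℝ} (hr : 0 < r) (hrR : r < R) :
    (coverN (ball x R ∩ X) r : ℝ) ≤ 2 ^ Fintype.card ι * (R / r) ^ Fintype.card ι := by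
  obtain ⟨S, hcard, hcov⟩ := exists_finset_card_le_ceil_pow_cover_ball x (R := R) hr
  have hceil : (⌈R / r⌉₊ : ℝ) ≤ 2 * (R / r) := by
    have hq : 1 < R / r := (one_lt_div hr).2 hrR
    linarith [Nat.ceil_lt_add_one (zero_le_one.trans hq.le)]
  calc (coverN (ball x R ∩ X) r : ℝ) ≤ (⌈R / r⌉₊ : ℝ) ^ Fintype.card ι := by
        exact_mod_cast (coverN_le_card (Set.inter_subset_left.trans hcov)).trans hcard
    _ ≤ (2 * (R / r)) ^ Fintype.card ι := by gcongr
    _ = 2 ^ Fintype.card ι * (R / r) ^ Fintype.card ι := mul_pow _ _ _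

lemma isAssouadExponent_card (X : Set (ι → ℝ)) : IsAssouadExponent X (Fintype.card ι) :=
  ⟨2 ^ Fintype.card ι, by positivity, fun x _ R r hr hrR => by
    simpa only [Real.rpow_natCast] using coverN_ball_inter_le X x hr hrR⟩

lemma one_le_coverN_mul_of_holeRadiusLE {X : Set (ι → ℝ)} {x : ι → ℝ} {r ε : ℝ} (hr : 0 < r)
    (hε : 0 < ε) (hε4 : ε ≤ 1 / 4) (hX : HoleRadiusLE X x r (ε * r)) :
    1 ≤ coverN (ball x r ∩ X) (ε * r) * (6 * ε) ^ Fintype.card ι := by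
  set n := Fintype.card ι
  have hεr : 0 < ε * r := by positivity
  obtain ⟨S, hcard, hS⟩ := exists_finset_card_le_coverN (X := ball x r ∩ X) (r := ε * r) <| by
    obtain ⟨S, -, hS⟩ := exists_finset_card_le_ceil_pow_cover_ball x (R := r) hεr
    exact ⟨S, Set.inter_subset_left.trans hS⟩
  have hcov : ball x (r - 2 * (ε * r)) ⊆ ⋃ c ∈ S, closedBall c (2 * (ε * r) + ε * r) :=
    hX.ball_subset_biUnion (by linarith) (by positivity) hS
  have hvol := pow_card_le_card_mul_pow_of_ball_subset (by nlinarith) (by positivity) hcov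
  have hhalf : (r / 2) ^ n ≤ (r - 2 * (ε * r)) ^ n := by gcongr; nlinarith
  have hcard' : (S.card : ℝ) ≤ coverN (ball x r ∩ X) (ε * r) := by exact_mod_cast hcard
  have key : (r / 2) ^ n * 1 ≤ (r / 2) ^ n * (coverN (ball x r ∩ X) (ε * r) * (6 * ε) ^ n) :=
    calc (r / 2) ^ n * 1 ≤ S.card * (2 * (ε * r) + ε * r) ^ n := by linarith
      _ ≤ coverN (ball x r ∩ X) (ε * r) * (2 * (ε * r) + ε * r) ^ n := by gcongr
      _ = (r / 2) ^ n * (coverN (ball x r ∩ X) (ε * r) * (6 * ε) ^ n) := by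
        rw [show 2 * (ε * r) + ε * r = r / 2 * (6 * ε) by ring, mul_pow]; ring
  exact le_of_mul_le_mul_left key (by positivity)

lemma IsAssouadExponent.card_le {X : Set (ι → ℝ)} {x : ι → ℝ} (hx : x ∈ X) {s : ℝ}
    (hs : IsAssouadExponent X s)
    (hpor : ∀ ε > (0 : ℝ), ∃ r > (0 : ℝ), HoleRadiusLE X x r (ε * r)) :
    (Fintype.card ι : ℝ) ≤ s := by
  obtain ⟨C, -, hbound⟩ := hs
  set n := Fintype.card ι
  by_contra! hsn
  have hsmall : ∀ᶠ ε in 𝓝[>] (0 : ℝ), ε ≤ 1 / 4 ∧ C * 6 ^ n * ε ^ ((n : ℝ) - s) < 1 := by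
    have hlim : Tendsto (fun ε : ℝ => C * 6 ^ n * ε ^ ((n : ℝ) - s)) (𝓝 0) (𝓝 0) := by
      have := ((Real.continuousAt_rpow_const 0 ((n : ℝ) - s)
        (Or.inr (by linarith))).const_mul (C * 6 ^ n)).tendsto
      rwa [Real.zero_rpow (by linarith), mul_zero] at this
    exact nhdsWithin_le_nhds
      ((eventually_le_nhds (by norm_num)).and (hlim.eventually (gt_mem_nhds one_pos)))
  obtain ⟨ε, ⟨hε4, hsmall⟩, hε⟩ := (hsmall.and self_mem_nhdsWithin).exists
  obtain ⟨r, hr, hX⟩ := hpor ε hε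
  have hlower := one_le_coverN_mul_of_holeRadiusLE hr hε hε4 hX
  have hupper := hbound x hx r (ε * r) (by positivity) (by nlinarith)
  have hscale : (r / (ε * r)) ^ s * ε ^ n = ε ^ ((n : ℝ) - s) := by
    rw [div_mul_cancel_right₀ hr.ne', Real.inv_rpow hε.le, ← Real.rpow_neg hε.le,
      ← Real.rpow_natCast, ← Real.rpow_add hε, neg_add_eq_sub]
  have hone : (1 : ℝ) ≤ C * 6 ^ n * ε ^ ((n : ℝ) - s) :=
    calc (1 : ℝ) ≤ coverN (ball x r ∩ X) (ε * r) * (6 * ε) ^ n := hlower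
      _ ≤ C * (r / (ε * r)) ^ s * (6 * ε) ^ n := by gcongr
      _ = C * 6 ^ n * ε ^ ((n : ℝ) - s) := by rw [← hscale, mul_pow]; ring
  linarith

end Euclidean

theorem zero_porosity_implies_full_assouad_dimension_general
    {d : ℕ} (X : Set (Fin d → ℝ)) (x : Fin d → ℝ) (hx : x ∈ X)
    (hpor : ∀ ε > (0 : ℝ), ∀ r₀ > (0 : ℝ), ∃ r : ℝ, 0 < r ∧ r < r₀ ∧
      ∀ (y : Fin d → ℝ) (ρ : ℝ), 0 < ρ →
        Metric.ball y ρ ⊆ Metric.ball x r \ X → ρ ≤ ε * r) :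
    assouadDim X = d := by
  have hpor' : ∀ ε > (0 : ℝ), ∃ r > (0 : ℝ), HoleRadiusLE X x r (ε * r) := fun ε hε =>
    (hpor ε hε 1 one_pos).imp fun _ ⟨hr, _, hX⟩ => ⟨hr, hX⟩
  have hleast : IsLeast {s | IsAssouadExponent X s} (Fintype.card (Fin d)) :=
    ⟨isAssouadExponent_card X, fun s hs => hs.card_le hx hpor'⟩
  rw [assouadDim_eq_sInf, hleast.csInf_eq, Fintype.card_fin]

/-- If `X ⊆ ℝ^d` contains a point `x` at which the lower porosity
vanishes in the uniform sense that for every `ε > 0` there are arbitrarily small scales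
`r` at which every hole of `B(x,r) \ X` has radius at most `ε r`, then the Assouad
dimension of `X` is maximal, equal to `d`. -/
theorem zero_porosity_implies_full_assouad_dimension
    {d : ℕ} (hd : 1 ≤ d) (X : Set (Fin d → ℝ)) (x : Fin d → ℝ) (hx : x ∈ X)
    (hpor : ∀ ε > (0 : ℝ), ∀ r₀ > (0 : ℝ), ∃ r : ℝ, 0 < r ∧ r < r₀ ∧
      ∀ (y : Fin d → ℝ) (ρ : ℝ), 0 < ρ →
        Metric.ball y ρ ⊆ Metric.ball x r \ X → ρ ≤ ε * r) :
    assouadDim X = d :=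
  zero_porosity_implies_full_assouad_dimension_general X x hx hpor

end
end

section
/- For Mandelbrot percolation in $\mathbb{R}^2$ with $N = 2$, a simple branching argument gives the lower bound $p_c > 2^{-1/2}$ on the critical probability for left-right crossing; more generally $p_c(N) > N^{-1/2}$ for all $N \geq 2$: if $p \leq N^{-1/2}$ then almost surely there is no connected component of $F$ joining the left and right sides of $[0,1]^2$. -/
open MeasureTheory ProbabilityTheory Filter

noncomputable section

abbrev Code (d N n : ℕ) := Fin n → Fin d → Fin N

def prefixCode {d N m n : ℕ} (h : m ≤ n) (c : Code d N n) : Code d N m :=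
  fun k => c (Fin.castLE h k)

def cubeBase {d N n : ℕ} (c : Code d N n) (j : Fin d) : ℝ :=
  ∑ k : Fin n, (c k j : ℝ) / (N : ℝ) ^ (k.1 + 1)

/-- The geometric level-`n` subcube of `[0,1]^d` coded by `c`. -/
def cube {d N : ℕ} (n : ℕ) (c : Code d N n) : Set (Fin d → ℝ) :=
  {x | ∀ j, cubeBase c j ≤ x j ∧ x j ≤ cubeBase c j + (1 / (N : ℝ)) ^ n}

/-- Fractal (Mandelbrot) percolation: each level-`n` cube carries an independent
Bernoulli retention variable with parameter `p n`. -/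
structure Perc (d N : ℕ) {Ω : Type} [MeasurableSpace Ω] (μ : Measure Ω) (p : ℕ → ℝ) where
  Y : (Σ n : ℕ, Code d N n) → Ω → Bool
  meas : ∀ i, Measurable (Y i)
  root : ∀ c ω, Y ⟨0, c⟩ ω = true
  dist : ∀ (n : ℕ) (c : Code d N (n + 1)),
    μ {ω | Y ⟨n + 1, c⟩ ω = true} = ENNReal.ofReal (p (n + 1))
  indep : iIndepFun Y μ

variable {d N : ℕ} {Ω : Type} [MeasurableSpace Ω] {μ : Measure Ω} {p : ℕ → ℝ}

/-- A level-`n` cube survives if it and all its ancestors are retained. -/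
def Perc.kept (P : Perc d N μ p) (n : ℕ) (c : Code d N n) (ω : Ω) : Prop :=
  ∀ m (h : m ≤ n), P.Y ⟨m, prefixCode h c⟩ ω = true

def Perc.level (P : Perc d N μ p) (n : ℕ) (ω : Ω) : Set (Fin d → ℝ) :=
  ⋃ c ∈ {c : Code d N n | P.kept n c ω}, cube n c

def Perc.limitSet (P : Perc d N μ p) (ω : Ω) : Set (Fin d → ℝ) :=
  ⋂ n, P.level n ω

/-!
A left–right crossing must cross the line `x 0 = 1 / N`, so at every level `n + 1` it passes
through two touching surviving squares, one in the column just left of that line and one in the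
column just right of it. The two squares have disjoint lineages, so such a pair survives with
probability `q ^ (2 (n + 1))`, and there are at most `3 N ^ (n + 1)` candidate pairs: the expected
number `Z n` of surviving pairs is at most `3 (N q²) ^ (n + 1) ≤ 3`.

A bounded mean does not suffice in the critical case `N q² = 1`. But whenever `Z n ≤ K`, deleting
all `N² K` children of the left squares of the surviving pairs kills every pair of the next level,
and this has probability at least `(1 - q) ^ (N² K)` independently of the first `n + 1` levels.
By Fatou's lemma `Z` is almost surely at most some `K` infinitely often, and each such time is a
fresh chance to die, so `Z` cannot stay positive forever.
-/

open Finset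
open scoped ENNReal Topology

section Extinction

section LowTimes

variable {α : Type*} {Z : ℕ → α → ℕ} {K : ℕ}

def lowTimes (Z : ℕ → α → ℕ) (K n : ℕ) (ω : α) : ℕ := #{m ∈ range n | Z m ω ≤ K}

lemma lowTimes_zero (ω : α) : lowTimes Z K 0 ω = 0 := rfl

lemma lowTimes_succ (n : ℕ) (ω : α) :
    lowTimes Z K (n + 1) ω = lowTimes Z K n ω + if Z n ω ≤ K then 1 else 0 := by
  rw [lowTimes, lowTimes, range_add_one, filter_insert]
  split_ifs <;> simp [card_insert_of_notMem]

lemma lowTimes_mono (ω : α) : Monotone fun n => lowTimes Z K n ω :=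
  monotone_nat_of_le_succ fun n => by rw [lowTimes_succ]; omega

lemma lowTimes_congr {n : ℕ} {ω ω' : α} (h : ∀ t < n, Z t ω = Z t ω') :
    lowTimes Z K n ω = lowTimes Z K n ω' := by
  unfold lowTimes
  congr 1
  exact filter_congr fun t ht => by rw [h t (mem_range.mp ht)]

lemma measurable_lowTimes [MeasurableSpace α] (hZ : ∀ n, Measurable (Z n)) (n : ℕ) :
    Measurable (lowTimes Z K n) := by
  have : lowTimes Z K n = fun ω => ∑ m ∈ range n, if Z m ω ≤ K then 1 else 0 :=
    funext fun ω => card_filter _ _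
  rw [this]
  exact Finset.measurable_sum _ fun m _ =>
    Measurable.ite (hZ m measurableSet_Iic) measurable_const measurable_const

def survivesLowTimes (Z : ℕ → α → ℕ) (K j : ℕ) : Set α :=
  {ω | ∃ n, j ≤ lowTimes Z K n ω ∧ 0 < Z n ω}

lemma survivesLowTimes_succ_subset (hpos : ∀ n ω, 0 < Z (n + 1) ω → 0 < Z n ω) (j : ℕ) :
    survivesLowTimes Z K (j + 1) ⊆ ⋃ m,
      {ω | Z m ω ≤ K ∧ lowTimes Z K m ω = j ∧ 0 < Z m ω} ∩ {ω | 0 < Z (m + 1) ω} := by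
  rintro ω ⟨n, hj, hZ⟩
  induction n with
  | zero => exact absurd hj (by simp [lowTimes_zero])
  | succ n ih =>
    by_cases hn : j + 1 ≤ lowTimes Z K n ω
    · exact ih hn (hpos n ω hZ)
    · have := lowTimes_succ (Z := Z) (K := K) n ω
      split_ifs at this with hK
      · exact Set.mem_iUnion.mpr ⟨n, ⟨hK, by omega, hpos n ω hZ⟩, hZ⟩
      · omega

end LowTimes

/-- Whenever `Z m ≤ K`, the conditional probability, given `Z 0, …, Z m`, that `Z (m + 1) > 0` is
at most `1 - δ`. -/
def HasDeathChance (μ : Measure Ω) (Z : ℕ → Ω → ℕ) (K : ℕ) (δ : ℝ≥0∞) : Prop :=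
  ∀ m (F : Set Ω), MeasurableSet F → (∀ ω ω', (∀ t ≤ m, Z t ω = Z t ω') → ω ∈ F → ω' ∈ F) →
    (∀ ω ∈ F, Z m ω ≤ K) → μ (F ∩ {ω | 0 < Z (m + 1) ω}) ≤ (1 - δ) * μ F

variable {Z : ℕ → Ω → ℕ} {K : ℕ}

lemma measure_survivesLowTimes_le [IsProbabilityMeasure μ] {δ : ℝ≥0∞}
    (hZ : ∀ n, Measurable (Z n)) (hpos : ∀ n ω, 0 < Z (n + 1) ω → 0 < Z n ω)
    (hkill : HasDeathChance μ Z K δ) (j : ℕ) : μ (survivesLowTimes Z K j) ≤ (1 - δ) ^ j := by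
  induction j with
  | zero => simpa using prob_le_one
  | succ j ih =>
    set F : ℕ → Set Ω := fun m => {ω | Z m ω ≤ K ∧ lowTimes Z K m ω = j ∧ 0 < Z m ω}
    have hF_meas m : MeasurableSet (F m) := (hZ m measurableSet_Iic).inter
      ((measurable_lowTimes hZ m (measurableSet_singleton j)).inter (hZ m measurableSet_Ioi))
    have hF_sat m ω ω' (h : ∀ t ≤ m, Z t ω = Z t ω') (hω : ω ∈ F m) : ω' ∈ F m := by
      show Z m ω' ≤ K ∧ lowTimes Z K m ω' = j ∧ 0 < Z m ω'
      rwa [← h m le_rfl, ← lowTimes_congr fun t ht => h t ht.le]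
    have hF_disj : Pairwise (Function.onFun Disjoint F) := by
      intro m m' hne
      wlog h : m < m' generalizing m m'
      · exact (this hne.symm (by omega)).symm
      refine Set.disjoint_left.mpr fun ω ⟨hK, hj, _⟩ ⟨_, hj', _⟩ => ?_
      have : lowTimes Z K (m + 1) ω ≤ lowTimes Z K m' ω := lowTimes_mono ω h
      rw [lowTimes_succ, if_pos hK] at this
      omega
    have hF_sub : ⋃ m, F m ⊆ survivesLowTimes Z K j :=
      Set.iUnion_subset fun m ω hω => ⟨m, hω.2.1.ge, hω.2.2⟩
    calc μ (survivesLowTimes Z K (j + 1))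
        ≤ μ (⋃ m, F m ∩ {ω | 0 < Z (m + 1) ω}) :=
          measure_mono (survivesLowTimes_succ_subset hpos j)
      _ ≤ ∑' m, μ (F m ∩ {ω | 0 < Z (m + 1) ω}) := measure_iUnion_le _
      _ ≤ ∑' m, (1 - δ) * μ (F m) :=
          ENNReal.tsum_le_tsum fun m => hkill m _ (hF_meas m) (hF_sat m) fun ω hω => hω.1
      _ = (1 - δ) * μ (⋃ m, F m) := by
          rw [ENNReal.tsum_mul_left, measure_iUnion hF_disj hF_meas]
      _ ≤ (1 - δ) * (1 - δ) ^ j := by gcongr; exact (measure_mono hF_sub).trans ih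
      _ = (1 - δ) ^ (j + 1) := by ring

lemma measure_forall_pos_frequently_le_eq_zero [IsProbabilityMeasure μ] {δ : ℝ≥0∞}
    (hZ : ∀ n, Measurable (Z n)) (hpos : ∀ n ω, 0 < Z (n + 1) ω → 0 < Z n ω) (hδ : δ ≠ 0)
    (hkill : HasDeathChance μ Z K δ) :
    μ {ω | (∀ n, 0 < Z n ω) ∧ ∃ᶠ n in atTop, Z n ω ≤ K} = 0 := by
  have hsub : {ω | (∀ n, 0 < Z n ω) ∧ ∃ᶠ n in atTop, Z n ω ≤ K} ⊆
      ⋂ j, survivesLowTimes Z K j := by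
    rintro ω ⟨hZω, hfreq⟩
    refine Set.mem_iInter.mpr fun j => ?_
    induction j with
    | zero => exact ⟨0, le_rfl, hZω 0⟩
    | succ j ih =>
      obtain ⟨n, hn, -⟩ := ih
      obtain ⟨m, hnm, hK⟩ := frequently_atTop.mp hfreq n
      refine ⟨m + 1, ?_, hZω _⟩
      have : lowTimes Z K n ω ≤ lowTimes Z K m ω := lowTimes_mono ω hnm
      rw [lowTimes_succ, if_pos hK]
      omega
  have hlim := ENNReal.tendsto_pow_atTop_nhds_zero_of_lt_one
    (ENNReal.sub_lt_self ENNReal.one_ne_top one_ne_zero hδ)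
  refine measure_mono_null hsub (le_antisymm (ge_of_tendsto' hlim fun j => ?_) bot_le)
  exact (measure_mono (Set.iInter_subset _ j)).trans (measure_survivesLowTimes_le hZ hpos hkill j)

lemma measure_eventually_gt_le (hZ : ∀ n, Measurable (Z n)) {B : ℝ≥0∞}
    (hmean : ∀ n, ∫⁻ ω, (Z n ω : ℝ≥0∞) ∂μ ≤ B) (K : ℕ) :
    μ {ω | ∀ᶠ n in atTop, K < Z n ω} ≤ B / (K + 1) := by
  have hZ' n : Measurable fun ω => (Z n ω : ℝ≥0∞) := measurable_from_top.comp (hZ n)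
  calc μ {ω | ∀ᶠ n in atTop, K < Z n ω}
      ≤ μ {ω | (K + 1 : ℝ≥0∞) ≤ liminf (fun n => (Z n ω : ℝ≥0∞)) atTop} :=
        measure_mono fun ω hω => le_liminf_of_le (u := fun n => (Z n ω : ℝ≥0∞))
          (h := hω.mono fun n hn => by exact_mod_cast Nat.succ_le_of_lt hn)
    _ ≤ (∫⁻ ω, liminf (fun n => (Z n ω : ℝ≥0∞)) atTop ∂μ) / (K + 1) :=
        meas_ge_le_lintegral_div (Measurable.liminf hZ').aemeasurable (by simp) (by simp)
    _ ≤ B / (K + 1) := by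
        gcongr
        exact (lintegral_liminf_le hZ').trans
          (liminf_le_of_frequently_le' (Frequently.of_forall hmean))

/-- Fatou's lemma bounds the probability that `Z` eventually exceeds `K`; otherwise `Z` is at most
`K` infinitely often, and each such time is a fresh chance `δ K` to die. -/
theorem measure_forall_pos_eq_zero_of_hasDeathChance [IsProbabilityMeasure μ]
    (hZ : ∀ n, Measurable (Z n)) (hpos : ∀ n ω, 0 < Z (n + 1) ω → 0 < Z n ω) {B : ℝ≥0∞} (hB : B ≠ ∞)
    (hmean : ∀ n, ∫⁻ ω, (Z n ω : ℝ≥0∞) ∂μ ≤ B) {δ : ℕ → ℝ≥0∞} (hδ : ∀ K, δ K ≠ 0)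
    (hkill : ∀ K, HasDeathChance μ Z K (δ K)) :
    μ {ω | ∀ n, 0 < Z n ω} = 0 := by
  have hK (K : ℕ) : μ {ω | ∀ n, 0 < Z n ω} ≤ B / (K + 1) :=
    calc μ {ω | ∀ n, 0 < Z n ω}
        ≤ μ ({ω | (∀ n, 0 < Z n ω) ∧ ∃ᶠ n in atTop, Z n ω ≤ K} ∪
            {ω | ∀ᶠ n in atTop, K < Z n ω}) := by
          refine measure_mono fun ω hω => ?_
          by_cases h : ∃ᶠ n in atTop, Z n ω ≤ K
          · exact Or.inl ⟨hω, h⟩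
          · exact Or.inr (by simpa [not_frequently] using h)
      _ ≤ 0 + B / (K + 1) := (measure_union_le _ _).trans (add_le_add
          (measure_forall_pos_frequently_le_eq_zero hZ hpos (hδ K) (hkill K)).le
          (measure_eventually_gt_le hZ hmean K))
      _ = B / (K + 1) := zero_add _
  have hlim : Tendsto (fun K : ℕ => B / (K + 1)) atTop (𝓝 0) := by
    simpa using ENNReal.Tendsto.const_div
      (ENNReal.tendsto_nat_nhds_top.comp (tendsto_add_atTop_nat 1)) (Or.inr hB)
  exact le_antisymm (ge_of_tendsto' hlim hK) bot_le

end Extinction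

section FreshChance

variable {δ : ℝ≥0∞}

lemma measure_inter_le_one_sub_mul [IsFiniteMeasure μ] {A S D : Set Ω} (hD : MeasurableSet D)
    (hAD : μ (A ∩ D) = μ A * μ D) (hδ : δ ≤ μ D) (hSD : ∀ ω ∈ A ∩ S, ω ∉ D) :
    μ (A ∩ S) ≤ (1 - δ) * μ A := by
  rw [ENNReal.sub_mul fun _ _ => measure_ne_top μ A, one_mul]
  refine ENNReal.le_sub_of_add_le_right
    (ENNReal.mul_ne_top (hδ.trans_lt (measure_lt_top μ D)).ne (measure_ne_top μ A)) ?_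
  calc μ (A ∩ S) + δ * μ A ≤ μ (A \ D) + μ (A ∩ D) := by
        rw [hAD, mul_comm]
        gcongr
        exact fun ω hω => ⟨hω.1, hSD ω hω⟩
    _ = μ A := by rw [add_comm, measure_inter_add_sdiff _ hD]

/-- Conditionally on `Φ`, the killing event `Ψ ∈ T` has probability at least `δ` and excludes `S`;
apply `measure_inter_le_one_sub_mul` on each of the finitely many atoms of `Φ`. -/
lemma measure_inter_le_of_indepFun {α β : Type*} [MeasurableSpace α]
    [MeasurableSingletonClass α] [Finite α] [MeasurableSpace β] [IsFiniteMeasure μ]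
    {Φ : Ω → α} {Ψ : Ω → β} (hΦ : Measurable Φ) (hΨ : Measurable Ψ) (hind : IndepFun Φ Ψ μ)
    {F S : Set Ω} {T : Ω → Set β} (hF : ∀ ω ω', Φ ω = Φ ω' → ω ∈ F → ω' ∈ F)
    (hT : ∀ ω ω', Φ ω = Φ ω' → T ω = T ω') (hT_meas : ∀ ω, MeasurableSet (T ω))
    (hδ : ∀ ω ∈ F, δ ≤ μ (Ψ ⁻¹' T ω)) (hS : ∀ ω ∈ F ∩ S, Ψ ω ∉ T ω) :
    μ (F ∩ S) ≤ (1 - δ) * μ F := by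
  set s := (Set.toFinite (Φ '' F)).toFinset
  have hFs : F = Φ ⁻¹' s := by
    ext ω
    simp only [s, Set.Finite.coe_toFinset, Set.mem_preimage, Set.mem_image]
    exact ⟨fun hω => ⟨ω, hω, rfl⟩, fun ⟨ω₀, hω₀, h⟩ => hF ω₀ ω h hω₀⟩
  have hatom : ∀ a ∈ s, μ (Φ ⁻¹' {a} ∩ S) ≤ (1 - δ) * μ (Φ ⁻¹' {a}) := by
    intro a ha
    obtain ⟨ω₀, hω₀, rfl⟩ := (Set.Finite.mem_toFinset _).mp ha
    refine measure_inter_le_one_sub_mul (hΨ (hT_meas ω₀))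
      (hind.measure_inter_preimage_eq_mul _ _ (measurableSet_singleton _) (hT_meas ω₀))
      (hδ ω₀ hω₀) fun ω ⟨hω, hωS⟩ => ?_
    rw [← hT ω ω₀ hω]
    exact hS ω ⟨hF ω₀ ω hω.symm hω₀, hωS⟩
  calc μ (F ∩ S) ≤ μ (⋃ a ∈ s, Φ ⁻¹' {a} ∩ S) := by
        refine measure_mono fun ω hω => Set.mem_biUnion ?_ ⟨rfl, hω.2⟩
        rw [hFs] at hω
        exact hω.1
    _ ≤ ∑ a ∈ s, μ (Φ ⁻¹' {a} ∩ S) := measure_biUnion_finset_le _ _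
    _ ≤ ∑ a ∈ s, (1 - δ) * μ (Φ ⁻¹' {a}) := sum_le_sum hatom
    _ = (1 - δ) * μ F := by
        rw [← mul_sum, hFs,
          sum_measure_preimage_singleton s fun a _ => hΦ (measurableSet_singleton a)]

end FreshChance

section Digits

variable {n : ℕ}

/-- The number with base-`N` digits `a 0, a 1, …, a (n - 1)`, most significant first. -/
def digitValue (a : Fin n → Fin N) : ℕ :=
  finFunctionFinEquiv (a ∘ Fin.rev)

lemma digitValue_injective : Function.Injective (digitValue : (Fin n → Fin N) → ℕ) :=
  fun a b h => funext fun k => by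
    simpa using congrFun (finFunctionFinEquiv.injective (Fin.ext h)) (Fin.rev k)

lemma digitValue_eq_sum (a : Fin n → Fin N) :
    digitValue a = ∑ k, (a k : ℕ) * N ^ (n - (k + 1)) := by
  rw [digitValue, finFunctionFinEquiv_apply]
  exact Fintype.sum_equiv Fin.revPerm _ _ fun i => by
    rw [Function.comp_apply, Fin.revPerm_apply, Fin.val_rev]
    congr 2
    omega

lemma digitValue_eq_mul_add (a : Fin (n + 1) → Fin N) :
    digitValue a = N * digitValue (Fin.init a) + a (Fin.last n) := by
  rw [digitValue, digitValue, finFunctionFinEquiv_apply, finFunctionFinEquiv_apply,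
    Fin.sum_univ_succ, mul_sum]
  simp only [Function.comp_apply, Fin.rev_zero, Fin.rev_succ, Fin.val_zero, Fin.val_succ, pow_zero,
    mul_one, Fin.init]
  rw [add_comm]
  exact congrArg (· + _) (sum_congr rfl fun i _ => by ring)

lemma digitValue_eq_pow_sub_one {a : Fin (n + 1) → Fin N}
    (ha : ∀ k, (a k : ℕ) = if (k : ℕ) = 0 then 0 else N - 1) : digitValue a = N ^ n - 1 := by
  obtain _ | M := N
  · exact (a 0).elim0
  rw [digitValue, finFunctionFinEquiv_apply, Fin.sum_univ_castSucc]
  simp only [Function.comp_apply, Fin.rev_castSucc, Fin.rev_last, ha, Fin.val_succ, Fin.val_zero,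
    Nat.add_one_ne_zero, if_false, if_true, Nat.add_sub_cancel, zero_mul, add_zero,
    Fin.val_castSucc]
  rw [Fin.sum_univ_eq_sum_range (fun i => M * (M + 1) ^ i), ← mul_sum, mul_comm,
    ← geom_sum_mul_add M n, Nat.add_sub_cancel]

lemma digitValue_eq_pow {a : Fin (n + 1) → Fin N}
    (ha : ∀ k, (a k : ℕ) = if (k : ℕ) = 0 then 1 else 0) : digitValue a = N ^ n := by
  rw [digitValue_eq_sum, Fintype.sum_eq_single 0 fun k hk => by
    simp [ha, Fin.val_ne_zero_iff.mpr hk]]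
  simp [ha]

end Digits

section Cubes

variable {n : ℕ}

lemma cubeBase_eq_digitValue_div (hN : 0 < N) (c : Code d N n) (j : Fin d) :
    cubeBase c j = digitValue (fun k => c k j) / (N : ℝ) ^ n := by
  rw [cubeBase, digitValue_eq_sum]
  push_cast
  rw [sum_div]
  refine sum_congr rfl fun k _ => ?_
  rw [div_eq_div_iff (by positivity) (by positivity), mul_assoc, ← pow_add]
  congr 2
  omega

lemma mem_cube_iff (hN : 0 < N) {c : Code d N n} {x : Fin d → ℝ} :
    x ∈ cube n c ↔ ∀ j, (digitValue (fun k => c k j) : ℝ) ≤ N ^ n * x j ∧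
      N ^ n * x j ≤ digitValue (fun k => c k j) + 1 := by
  have hpos : (0 : ℝ) < (N : ℝ) ^ n := by positivity
  simp only [cube, Set.mem_ofPred_eq, cubeBase_eq_digitValue_div hN, one_div_pow, ← add_div]
  exact forall_congr' fun j => and_congr (div_le_iff₀' hpos) (le_div_iff₀' hpos)

lemma digitValue_le_add_one_of_mem_cube (hN : 0 < N) {c c' : Code d N n} {z : Fin d → ℝ}
    (hz : z ∈ cube n c) (hz' : z ∈ cube n c') (j : Fin d) :
    digitValue (fun k => c k j) ≤ digitValue (fun k => c' k j) + 1 := by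
  exact_mod_cast ((mem_cube_iff hN).mp hz j).1.trans ((mem_cube_iff hN).mp hz' j).2

lemma cube_subset_prefixCode (hN : 0 < N) (c : Code d N (n + 1)) :
    cube (n + 1) c ⊆ cube n (prefixCode (Nat.le_succ n) c) := by
  intro x hx
  rw [mem_cube_iff hN] at hx ⊢
  intro j
  obtain ⟨h₁, h₂⟩ := hx j
  have hv : (digitValue (fun k => c k j) : ℝ) =
      N * digitValue (fun k => prefixCode (Nat.le_succ n) c k j) + (c (Fin.last n) j : ℕ) := by
    exact_mod_cast digitValue_eq_mul_add (fun k => c k j)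
  have hr : ((c (Fin.last n) j : ℕ) : ℝ) + 1 ≤ N := by exact_mod_cast (c (Fin.last n) j).isLt
  have hN' : (0 : ℝ) < N := by exact_mod_cast hN
  rw [hv, pow_succ] at h₁ h₂
  constructor
  · refine le_of_mul_le_mul_left ?_ hN'
    linarith [(c (Fin.last n) j : ℕ).cast_nonneg (α := ℝ)]
  · refine le_of_mul_le_mul_left ?_ hN'
    linarith

lemma isClosed_cube (c : Code d N n) : IsClosed (cube n c) := by
  have : cube n c =
      ⋂ j, {x | cubeBase c j ≤ x j} ∩ {x | x j ≤ cubeBase c j + (1 / (N : ℝ)) ^ n} := by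
    ext x
    simp [cube]
  rw [this]
  exact isClosed_iInter fun j => (isClosed_le continuous_const (continuous_apply j)).inter
    (isClosed_le (continuous_apply j) continuous_const)

end Cubes

section Lineage

variable {n : ℕ}

def Code.lineage (c : Code d N n) : Finset (Σ t, Code d N t) :=
  univ.image fun m : Fin n => ⟨m + 1, prefixCode m.isLt c⟩

lemma Code.card_lineage (c : Code d N n) : #c.lineage = n := by
  rw [Code.lineage, card_image_of_injective _ fun m m' h =>
    Fin.ext (by simpa using congrArg Sigma.fst h), card_univ, Fintype.card_fin]

lemma Code.disjoint_lineage {c c' : Code d N (n + 1)} (h : c 0 ≠ c' 0) :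
    Disjoint c.lineage c'.lineage := by
  simp only [Code.lineage, disjoint_left, mem_image, mem_univ, true_and, not_exists]
  rintro _ ⟨m, rfl⟩ m' hmm'
  obtain ⟨hm, hc⟩ := Sigma.mk.inj_iff.mp hmm'
  obtain rfl : m' = m := Fin.ext (by omega)
  exact h (congrFun (eq_of_heq hc) ⟨0, by omega⟩).symm

end Lineage

section PairFamily

abbrev PairFamily (d N : ℕ) := (n : ℕ) → Finset (Code d N (n + 1) × Code d N (n + 1))

def PairFamily.Hereditary (pairs : PairFamily d N) : Prop :=
  ∀ n, ∀ cc ∈ pairs (n + 1),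
    (prefixCode (Nat.le_succ _) cc.1, prefixCode (Nat.le_succ _) cc.2) ∈ pairs n

/-- The two codes of every pair lie in different squares of level `1`. -/
def PairFamily.Separated (pairs : PairFamily d N) : Prop :=
  ∀ n, ∀ cc ∈ pairs n, cc.1 0 ≠ cc.2 0

end PairFamily

namespace Perc

section Basic

variable (P : Perc d N μ p)

def AgreeUpTo (n : ℕ) (ω ω' : Ω) : Prop :=
  ∀ i : Σ t, Code d N t, i.1 ≤ n → P.Y i ω = P.Y i ω'

variable {P}

lemma kept_congr {n : ℕ} {ω ω' : Ω} (h : P.AgreeUpTo n ω ω') (c : Code d N n) :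
    P.kept n c ω ↔ P.kept n c ω' :=
  forall₂_congr fun m hm => by rw [h ⟨m, _⟩ hm]

lemma kept_prefixCode {m n : ℕ} (hmn : m ≤ n) {c : Code d N n} {ω : Ω} (h : P.kept n c ω) :
    P.kept m (prefixCode hmn c) ω :=
  fun k hk => h k (hk.trans hmn)

lemma Y_eq_true_of_kept {n : ℕ} {c : Code d N n} {ω : Ω} (h : P.kept n c ω) :
    P.Y ⟨n, c⟩ ω = true :=
  h n le_rfl

variable (P) in
lemma measurableSet_kept (n : ℕ) (c : Code d N n) : MeasurableSet {ω | P.kept n c ω} := by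
  simp only [kept, Set.ofPred_forall]
  exact .iInter fun m => .iInter fun _ => P.meas _ (measurableSet_singleton true)

variable (P) in
lemma measurableSet_kept_and_kept (n : ℕ) (c c' : Code d N n) :
    MeasurableSet {ω | P.kept n c ω ∧ P.kept n c' ω} :=
  (measurableSet_kept P n c).inter (measurableSet_kept P n c')

end Basic

section Retention

variable {q : ℝ} (P : Perc d N μ fun _ => q)

lemma measure_Y_eq_true {i : Σ t, Code d N t} (hi : i.1 ≠ 0) :
    μ (P.Y i ⁻¹' {true}) = ENNReal.ofReal q := by
  obtain ⟨_ | n, c⟩ := i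
  · exact absurd rfl hi
  · exact P.dist n c

lemma measure_biInter_Y_eq_true {I : Finset (Σ t, Code d N t)} (hI : ∀ i ∈ I, i.1 ≠ 0) :
    μ (⋂ i ∈ I, P.Y i ⁻¹' {true}) = ENNReal.ofReal q ^ #I := by
  rw [P.indep.meas_biInter fun i _ => ⟨{true}, measurableSet_singleton _, rfl⟩,
    prod_congr rfl fun i hi => P.measure_Y_eq_true (hI i hi), prod_const]

lemma measure_biInter_Y_eq_false {I : Finset (Σ t, Code d N t)} (hI : ∀ i ∈ I, i.1 ≠ 0) :
    μ (⋂ i ∈ I, P.Y i ⁻¹' {false}) = (1 - ENNReal.ofReal q) ^ #I := by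
  have := P.indep.isProbabilityMeasure
  rw [P.indep.meas_biInter fun i _ => ⟨{false}, measurableSet_singleton _, rfl⟩, ← prod_const]
  refine prod_congr rfl fun i hi => ?_
  rw [← P.measure_Y_eq_true (hI i hi),
    ← prob_compl_eq_one_sub (P.meas i (measurableSet_singleton _))]
  congr 1
  ext ω
  simp

lemma measure_kept_and_kept_le {n : ℕ} {c c' : Code d N (n + 1)} (h : c 0 ≠ c' 0) :
    μ {ω | P.kept (n + 1) c ω ∧ P.kept (n + 1) c' ω} ≤
      ENNReal.ofReal q ^ (2 * (n + 1)) := by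
  have hI : ∀ i ∈ c.lineage ∪ c'.lineage, i.1 ≠ 0 := by
    simp only [Code.lineage, mem_union, mem_image, mem_univ, true_and]
    rintro _ (⟨m, rfl⟩ | ⟨m, rfl⟩) <;> simp
  calc μ {ω | P.kept (n + 1) c ω ∧ P.kept (n + 1) c' ω}
      ≤ μ (⋂ i ∈ c.lineage ∪ c'.lineage, P.Y i ⁻¹' {true}) := by
        refine measure_mono fun ω ⟨hc, hc'⟩ => Set.mem_iInter₂.mpr fun i hi => ?_
        simp only [Code.lineage, mem_union, mem_image, mem_univ, true_and] at hi
        obtain ⟨m, rfl⟩ | ⟨m, rfl⟩ := hi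
        exacts [hc _ m.isLt, hc' _ m.isLt]
    _ = ENNReal.ofReal q ^ (2 * (n + 1)) := by
        rw [P.measure_biInter_Y_eq_true hI, card_union_of_disjoint (Code.disjoint_lineage h),
          Code.card_lineage, Code.card_lineage, two_mul]

end Retention

section Pairs

open Classical in
def aliveCount (P : Perc d N μ p) (pairs : PairFamily d N) (n : ℕ) (ω : Ω) : ℕ :=
  #{cc ∈ pairs n | P.kept (n + 1) cc.1 ω ∧ P.kept (n + 1) cc.2 ω}

open Classical in
def aliveFirsts (P : Perc d N μ p) (pairs : PairFamily d N) (n : ℕ) (ω : Ω) :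
    Finset (Code d N (n + 1)) :=
  {cc ∈ pairs n | P.kept (n + 1) cc.1 ω ∧ P.kept (n + 1) cc.2 ω}.image Prod.fst

variable {P : Perc d N μ p} {pairs : PairFamily d N}

lemma aliveCount_pos_iff {n : ℕ} {ω : Ω} :
    0 < P.aliveCount pairs n ω ↔ ∃ cc ∈ pairs n, P.kept (n + 1) cc.1 ω ∧ P.kept (n + 1) cc.2 ω := by
  simp [aliveCount, card_pos, Finset.Nonempty]

lemma aliveCount_congr {n : ℕ} {ω ω' : Ω} (h : P.AgreeUpTo (n + 1) ω ω') :
    P.aliveCount pairs n ω = P.aliveCount pairs n ω' := by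
  classical
  unfold aliveCount
  congr 1
  exact filter_congr fun cc _ => by rw [kept_congr h, kept_congr h]

lemma card_aliveFirsts_le (n : ℕ) (ω : Ω) :
    #(P.aliveFirsts pairs n ω) ≤ P.aliveCount pairs n ω :=
  card_image_le

lemma aliveFirsts_congr {n : ℕ} {ω ω' : Ω} (h : P.AgreeUpTo (n + 1) ω ω') :
    P.aliveFirsts pairs n ω = P.aliveFirsts pairs n ω' := by
  classical
  unfold aliveFirsts
  congr 1
  exact filter_congr fun cc _ => by rw [kept_congr h, kept_congr h]

lemma exists_Y_eq_true_of_aliveCount_succ_pos (hered : pairs.Hereditary) {n : ℕ} {ω : Ω}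
    (h : 0 < P.aliveCount pairs (n + 1) ω) :
    ∃ c, prefixCode (Nat.le_succ _) c ∈ P.aliveFirsts pairs n ω ∧ P.Y ⟨n + 2, c⟩ ω = true := by
  classical
  obtain ⟨cc, hcc, h₁, h₂⟩ := aliveCount_pos_iff.mp h
  refine ⟨cc.1, mem_image.mpr ⟨_, mem_filter.mpr ⟨hered n cc hcc, ?_⟩, rfl⟩, Y_eq_true_of_kept h₁⟩
  exact ⟨kept_prefixCode (c := cc.1) _ h₁, kept_prefixCode (c := cc.2) _ h₂⟩

lemma aliveCount_pos_of_succ (hered : pairs.Hereditary) {n : ℕ} {ω : Ω}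
    (h : 0 < P.aliveCount pairs (n + 1) ω) : 0 < P.aliveCount pairs n ω :=
  have ⟨_, hc, _⟩ := exists_Y_eq_true_of_aliveCount_succ_pos hered h
  (card_pos.mpr ⟨_, hc⟩).trans_le (card_aliveFirsts_le n ω)

lemma natCast_aliveCount {R : Type*} [AddCommMonoidWithOne R] (n : ℕ) (ω : Ω) :
    (P.aliveCount pairs n ω : R) =
      ∑ cc ∈ pairs n, {ω | P.kept (n + 1) cc.1 ω ∧ P.kept (n + 1) cc.2 ω}.indicator 1 ω := by
  classical
  rw [aliveCount, natCast_card_filter]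
  exact sum_congr rfl fun cc _ => by simp [Set.indicator_apply]

variable (P pairs) in
lemma measurable_aliveCount (n : ℕ) : Measurable (P.aliveCount pairs n) := by
  have : P.aliveCount pairs n = fun ω =>
      ∑ cc ∈ pairs n, {ω | P.kept (n + 1) cc.1 ω ∧ P.kept (n + 1) cc.2 ω}.indicator 1 ω :=
    funext fun ω => (Nat.cast_id _).symm.trans (natCast_aliveCount n ω)
  rw [this]
  exact Finset.measurable_sum _ fun cc _ =>
    measurable_const.indicator (measurableSet_kept_and_kept P _ _ _)

end Pairs

section PairsExtinction

variable {q : ℝ} {P : Perc d N μ fun _ => q} {pairs : PairFamily d N}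

lemma lintegral_aliveCount_le (hsep : pairs.Separated) (n : ℕ) :
    ∫⁻ ω, (P.aliveCount pairs n ω : ℝ≥0∞) ∂μ ≤ #(pairs n) * ENNReal.ofReal q ^ (2 * (n + 1)) :=
  calc ∫⁻ ω, (P.aliveCount pairs n ω : ℝ≥0∞) ∂μ
      = ∑ cc ∈ pairs n, μ {ω | P.kept (n + 1) cc.1 ω ∧ P.kept (n + 1) cc.2 ω} := by
        simp_rw [natCast_aliveCount]
        rw [lintegral_finsetSum]
        · exact sum_congr rfl fun cc _ =>
            lintegral_indicator_one (measurableSet_kept_and_kept P _ _ _)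
        · exact fun cc _ => measurable_const.indicator (measurableSet_kept_and_kept P _ _ _)
    _ ≤ ∑ _cc ∈ pairs n, ENNReal.ofReal q ^ (2 * (n + 1)) :=
        sum_le_sum fun cc hcc => P.measure_kept_and_kept_le (hsep n cc hcc)
    _ = #(pairs n) * ENNReal.ofReal q ^ (2 * (n + 1)) := by rw [sum_const, nsmul_eq_mul]

lemma card_filter_prefixCode_mem_le {n : ℕ} (s : Finset (Code d N n)) :
    #{c : Code d N (n + 1) | prefixCode (Nat.le_succ n) c ∈ s} ≤ N ^ d * #s :=
  calc #{c : Code d N (n + 1) | prefixCode (Nat.le_succ n) c ∈ s}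
      ≤ #((s ×ˢ (univ : Finset (Fin d → Fin N))).image
          fun x => (Fin.snoc x.1 x.2 : Code d N (n + 1))) := by
        refine card_le_card fun c hc => mem_image.mpr ⟨(Fin.init c, c (Fin.last n)), ?_, ?_⟩
        · exact mem_product.mpr ⟨(mem_filter.mp hc).2, mem_univ _⟩
        · exact Fin.snoc_init_self c
    _ ≤ N ^ d * #s := by
        refine card_image_le.trans_eq ?_
        rw [card_product, card_univ, Fintype.card_fun, Fintype.card_fin, Fintype.card_fin, mul_comm]

/-- If every child of the first cube of a surviving pair of level `m + 1` is deleted, then no pair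
survives at level `m + 2`; there are at most `N ^ d * K` such children. -/
lemma measure_inter_aliveCount_succ_pos_le (hered : pairs.Hereditary) {K m : ℕ} {F : Set Ω}
    (hF : ∀ ω ω', P.AgreeUpTo (m + 1) ω ω' → ω ∈ F → ω' ∈ F)
    (hK : ∀ ω ∈ F, P.aliveCount pairs m ω ≤ K) :
    μ (F ∩ {ω | 0 < P.aliveCount pairs (m + 1) ω}) ≤
      (1 - (1 - ENNReal.ofReal q) ^ (N ^ d * K)) * μ F := by
  classical
  have := P.indep.isProbabilityMeasure
  set past : Finset (Σ t, Code d N t) := (range (m + 2)).sigma fun _ => univ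
  set next : Finset (Σ t, Code d N t) := ({m + 2} : Finset ℕ).sigma fun _ => univ
  have hdisj : Disjoint past next := by
    simp only [past, next, disjoint_left, mem_sigma, mem_range, mem_singleton]
    exact fun i hi hi' => by omega
  have hagree (ω ω' : Ω) (h : (fun i : past => P.Y i ω) = fun i : past => P.Y i ω') :
      P.AgreeUpTo (m + 1) ω ω' :=
    fun i hi => congrFun h ⟨i, by simp [past]; omega⟩
  set children : Ω → Finset (Code d N (m + 2)) := fun ω =>
    {c | prefixCode (Nat.le_succ _) c ∈ P.aliveFirsts pairs m ω}
  have hchildren (ω : Ω) (hω : ω ∈ F) : #(children ω) ≤ N ^ d * K :=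
    (card_filter_prefixCode_mem_le _).trans
      (Nat.mul_le_mul_left _ ((card_aliveFirsts_le m ω).trans (hK ω hω)))
  refine measure_inter_le_of_indepFun (Φ := fun ω (i : past) => P.Y i ω)
    (Ψ := fun ω (i : next) => P.Y i ω) (measurable_pi_lambda _ fun i => P.meas i)
    (measurable_pi_lambda _ fun i => P.meas i) (P.indep.indepFun_finset past next hdisj P.meas)
    (T := fun ω => {h | ∀ c ∈ children ω, h ⟨⟨m + 2, c⟩, by simp [next]⟩ = false})
    (fun ω ω' h => hF ω ω' (hagree ω ω' h)) ?_ (fun ω => (Set.toFinite _).measurableSet) ?_ ?_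
  · intro ω ω' h
    simp only [children, aliveFirsts_congr (hagree ω ω' h)]
  · intro ω hω
    calc (1 - ENNReal.ofReal q) ^ (N ^ d * K)
        ≤ (1 - ENNReal.ofReal q) ^ #(children ω) :=
          pow_le_pow_of_le_one bot_le tsub_le_self (hchildren ω hω)
      _ = μ (⋂ i ∈ (children ω).image fun c => ⟨m + 2, c⟩, P.Y i ⁻¹' {false}) := by
          rw [P.measure_biInter_Y_eq_false (by simp), card_image_of_injective _ sigma_mk_injective]
      _ = _ := by
          congr 1
          ext ω'
          simp
  · rintro ω ⟨-, hω⟩ hT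
    obtain ⟨c, hc, hY⟩ := exists_Y_eq_true_of_aliveCount_succ_pos hered hω
    simpa [hY] using hT c (mem_filter.mpr ⟨mem_univ _, hc⟩)

theorem measure_forall_aliveCount_pos_eq_zero (hq : q < 1) (hered : pairs.Hereditary)
    (hsep : pairs.Separated) {B : ℝ≥0∞} (hB : B ≠ ∞)
    (hcard : ∀ n, #(pairs n) * ENNReal.ofReal q ^ (2 * (n + 1)) ≤ B) :
    μ {ω | ∀ n, 0 < P.aliveCount pairs n ω} = 0 := by
  have := P.indep.isProbabilityMeasure
  refine measure_forall_pos_eq_zero_of_hasDeathChance (measurable_aliveCount P pairs)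
    (fun n ω => aliveCount_pos_of_succ hered) hB
    (fun n => (lintegral_aliveCount_le hsep n).trans (hcard n))
    (fun K => pow_ne_zero _ (tsub_pos_of_lt (ENNReal.ofReal_lt_one.mpr hq)).ne')
    fun K m F _ hF hK => measure_inter_aliveCount_succ_pos_le hered (fun ω ω' h => hF ω ω'
      fun t ht => aliveCount_congr fun i hi => h i (hi.trans (by omega))) hK

end PairsExtinction

/-- The surviving cubes left of the hyperplane and those right of it form two closed sets covering
`C`, so `C` meets both at once. -/
lemma exists_kept_touching_of_isPreconnected (hN : 0 < N) {P : Perc d N μ p} {n : ℕ} {ω : Ω}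
    {C : Set (Fin d → ℝ)} (hC : IsPreconnected C) (hCl : C ⊆ P.level n ω) (j : Fin d) {k : ℕ}
    {x y : Fin d → ℝ} (hx : x ∈ C) (hy : y ∈ C) (hxk : (N : ℝ) ^ n * x j < k)
    (hyk : (k : ℝ) + 1 ≤ N ^ n * y j) :
    ∃ c c' : Code d N n, P.kept n c ω ∧ P.kept n c' ω ∧ (cube n c ∩ cube n c').Nonempty ∧
      digitValue (fun i => c i j) + 1 = k ∧ digitValue (fun i => c' i j) = k := by
  have hmem (z) (hz : z ∈ C) : ∃ c, P.kept n c ω ∧ z ∈ cube n c := by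
    simpa [Perc.level] using hCl hz
  set L := ⋃ c ∈ {c : Code d N n | P.kept n c ω ∧ digitValue (fun i => c i j) < k}, cube n c
  set R := ⋃ c ∈ {c : Code d N n | P.kept n c ω ∧ k ≤ digitValue (fun i => c i j)}, cube n c
  have hLR : C ⊆ L ∪ R := fun z hz => by
    obtain ⟨c, hc, hzc⟩ := hmem z hz
    rcases lt_or_ge (digitValue fun i => c i j) k with h | h
    exacts [Or.inl (Set.mem_biUnion ⟨hc, h⟩ hzc), Or.inr (Set.mem_biUnion ⟨hc, h⟩ hzc)]
  have hxL : x ∈ L := by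
    obtain ⟨c, hc, hxc⟩ := hmem x hx
    refine Set.mem_biUnion ⟨hc, ?_⟩ hxc
    exact_mod_cast ((mem_cube_iff hN).mp hxc j).1.trans_lt hxk
  have hyR : y ∈ R := by
    obtain ⟨c, hc, hyc⟩ := hmem y hy
    refine Set.mem_biUnion ⟨hc, ?_⟩ hyc
    exact_mod_cast le_of_add_le_add_right (hyk.trans ((mem_cube_iff hN).mp hyc j).2)
  obtain ⟨z, -, hzL, hzR⟩ := isPreconnected_closed_iff.mp hC L R
    ((Set.toFinite _).isClosed_biUnion fun c _ => isClosed_cube c)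
    ((Set.toFinite _).isClosed_biUnion fun c _ => isClosed_cube c) hLR ⟨x, hx, hxL⟩ ⟨y, hy, hyR⟩
  simp only [L, R, Set.mem_iUnion₂, exists_prop] at hzL hzR
  obtain ⟨c, ⟨hc, hck⟩, hzc⟩ := hzL
  obtain ⟨c', ⟨hc', hc'k⟩, hzc'⟩ := hzR
  have := digitValue_le_add_one_of_mem_cube hN hzc' hzc j
  exact ⟨c, c', hc, hc', ⟨z, hzc, hzc'⟩, by omega, by omega⟩

end Perc

section Planar

variable {n : ℕ}

open Classical in
/-- Touching pairs of level-`(n + 1)` squares, the first in the column just left of the line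
`x 0 = 1 / N` (first coordinate digits `0, N - 1, …, N - 1`), the second in the column just right
of it (digits `1, 0, …, 0`). -/
def straddlingPairs (N n : ℕ) : Finset (Code 2 N (n + 1) × Code 2 N (n + 1)) :=
  {cc | (∀ k, (cc.1 k 0 : ℕ) = if (k : ℕ) = 0 then 0 else N - 1) ∧
    (∀ k, (cc.2 k 0 : ℕ) = if (k : ℕ) = 0 then 1 else 0) ∧
    (cube (n + 1) cc.1 ∩ cube (n + 1) cc.2).Nonempty}

lemma mem_straddlingPairs_iff {cc : Code 2 N (n + 1) × Code 2 N (n + 1)} :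
    cc ∈ straddlingPairs N n ↔ (∀ k, (cc.1 k 0 : ℕ) = if (k : ℕ) = 0 then 0 else N - 1) ∧
      (∀ k, (cc.2 k 0 : ℕ) = if (k : ℕ) = 0 then 1 else 0) ∧
      (cube (n + 1) cc.1 ∩ cube (n + 1) cc.2).Nonempty := by
  simp [straddlingPairs]

lemma Code.ext_two {c c' : Code 2 N n} (h₀ : ∀ k, c k 0 = c' k 0) (h₁ : ∀ k, c k 1 = c' k 1) :
    c = c' :=
  funext fun k => funext fun j => by fin_cases j; exacts [h₀ k, h₁ k]

lemma straddlingPairs_hereditary (hN : 0 < N) : PairFamily.Hereditary (straddlingPairs N) := by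
  intro n cc h
  obtain ⟨h₁, h₂, z, hz₁, hz₂⟩ := mem_straddlingPairs_iff.mp h
  exact mem_straddlingPairs_iff.mpr ⟨fun k => h₁ _, fun k => h₂ _, z,
    cube_subset_prefixCode hN _ hz₁, cube_subset_prefixCode hN _ hz₂⟩

lemma straddlingPairs_separated : PairFamily.Separated (straddlingPairs N) := by
  intro n cc h h₀
  have h₁ := (mem_straddlingPairs_iff.mp h).1 0
  have h₂ := (mem_straddlingPairs_iff.mp h).2.1 0
  simp only [Fin.val_zero, if_true, h₀] at h₁ h₂
  omega

lemma card_straddlingPairs_le (hN : 0 < N) : #(straddlingPairs N n) ≤ 3 * N ^ (n + 1) := by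
  have key (cc) (hcc : cc ∈ straddlingPairs N n) :
      digitValue (fun k => cc.1 k 1) ≤ digitValue (fun k => cc.2 k 1) + 1 ∧
        digitValue (fun k => cc.2 k 1) ≤ digitValue (fun k => cc.1 k 1) + 1 := by
    obtain ⟨-, -, z, hz₁, hz₂⟩ := mem_straddlingPairs_iff.mp hcc
    exact ⟨digitValue_le_add_one_of_mem_cube hN hz₁ hz₂ 1,
      digitValue_le_add_one_of_mem_cube hN hz₂ hz₁ 1⟩
  calc #(straddlingPairs N n)
      ≤ #((univ : Finset (Fin (n + 1) → Fin N)) ×ˢ range 3) := by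
        refine card_le_card_of_injOn (fun cc => (fun k => cc.1 k 1,
          digitValue (fun k => cc.2 k 1) + 1 - digitValue (fun k => cc.1 k 1))) ?_ ?_
        · intro cc hcc
          have := key cc hcc
          simp only [coe_product, coe_univ, coe_range, Set.mem_prod, Set.mem_univ, Set.mem_Iio,
            true_and]
          omega
        · intro cc hcc cc' hcc' h
          obtain ⟨hy₁, hy₂⟩ := Prod.mk.inj h
          obtain ⟨hx₁, hx₂, -⟩ := mem_straddlingPairs_iff.mp hcc
          obtain ⟨hx₁', hx₂', -⟩ := mem_straddlingPairs_iff.mp hcc'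
          have h₁ : cc.1 = cc'.1 :=
            Code.ext_two (fun k => Fin.ext ((hx₁ k).trans (hx₁' k).symm)) (congrFun hy₁)
          have hk := key cc hcc
          have hk' := key cc' hcc'
          rw [h₁] at hy₂ hk
          have h₂ : (fun k => cc.2 k 1) = fun k => cc'.2 k 1 := digitValue_injective (by omega)
          exact Prod.ext h₁
            (Code.ext_two (fun k => Fin.ext ((hx₂ k).trans (hx₂' k).symm)) (congrFun h₂))
    _ = 3 * N ^ (n + 1) := by
        rw [card_product, card_univ, Fintype.card_fun, Fintype.card_fin, Fintype.card_fin,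
          card_range, mul_comm]

lemma mem_straddlingPairs_of_digitValue (hN : 2 ≤ N) {c c' : Code 2 N (n + 1)}
    (hc : digitValue (fun k => c k 0) + 1 = N ^ n) (hc' : digitValue (fun k => c' k 0) = N ^ n)
    (hcc' : (cube (n + 1) c ∩ cube (n + 1) c').Nonempty) : (c, c') ∈ straddlingPairs N n := by
  let a : Fin (n + 1) → Fin N := fun k =>
    ⟨if (k : ℕ) = 0 then 0 else N - 1, by split_ifs <;> omega⟩
  let a' : Fin (n + 1) → Fin N := fun k =>
    ⟨if (k : ℕ) = 0 then 1 else 0, by split_ifs <;> omega⟩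
  have ha : (fun k => c k 0) = a :=
    digitValue_injective ((digitValue_eq_pow_sub_one (a := a) fun _ => rfl).symm ▸ by omega)
  have ha' : (fun k => c' k 0) = a' :=
    digitValue_injective ((digitValue_eq_pow (a := a') fun _ => rfl).symm ▸ hc')
  exact mem_straddlingPairs_iff.mpr
    ⟨fun k => congrArg Fin.val (congrFun ha k), fun k => congrArg Fin.val (congrFun ha' k), hcc'⟩

lemma card_straddlingPairs_mul_pow_le (hN : 0 < N) {r : ℝ≥0∞} (hr : N * r ^ 2 ≤ 1) (n : ℕ) :
    #(straddlingPairs N n) * r ^ (2 * (n + 1)) ≤ 3 :=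
  calc #(straddlingPairs N n) * r ^ (2 * (n + 1))
      ≤ 3 * N ^ (n + 1) * r ^ (2 * (n + 1)) := by
        gcongr
        exact_mod_cast card_straddlingPairs_le hN
    _ = 3 * (N * r ^ 2) ^ (n + 1) := by ring
    _ ≤ 3 := mul_le_of_le_one_right' (pow_le_one' hr _)

lemma natCast_mul_ofReal_sq_le_one (hN : 0 < N) {q : ℝ} (hq : q ≤ (N : ℝ) ^ (-(1 / 2) : ℝ)) :
    (N : ℝ≥0∞) * ENNReal.ofReal q ^ 2 ≤ 1 :=
  calc (N : ℝ≥0∞) * ENNReal.ofReal q ^ 2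
      ≤ N * ENNReal.ofReal ((N : ℝ) ^ (-(1 / 2) : ℝ)) ^ 2 := by gcongr
    _ = ENNReal.ofReal (N * ((N : ℝ) ^ (-(1 / 2) : ℝ)) ^ 2) := by
        rw [ENNReal.ofReal_mul (by positivity), ENNReal.ofReal_pow (by positivity),
          ENNReal.ofReal_natCast]
    _ = 1 := by
        rw [← Real.rpow_natCast, ← Real.rpow_mul (by positivity)]
        norm_num [Real.rpow_neg_one, mul_inv_cancel₀ (by positivity : (N : ℝ) ≠ 0)]

end Planar

/-- For planar Mandelbrot percolation with subdivision parameter `N`,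
if `p ≤ N^{-1/2}` then almost surely there is no connected component of the limit set
joining the left side `{0} × [0,1]` and the right side `{1} × [0,1]` of the unit square;
hence the critical probability for left-right crossing satisfies `p_c(N) > N^{-1/2}`. -/
theorem no_crossing_below_sqrt_threshold
    (hN : 2 ≤ N) (hd : d = 2)
    (q : ℝ) (hqle : q ≤ (N : ℝ) ^ (-(1 / 2) : ℝ))
    (hp : p = fun _ => q) (P : Perc d N μ p) :
    ∀ᵐ ω ∂μ, ¬ ∃ C : Set (Fin d → ℝ),
      C ⊆ P.limitSet ω ∧ IsPreconnected C ∧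
      (∃ x ∈ C, x ⟨0, by omega⟩ = 0) ∧ (∃ y ∈ C, y ⟨0, by omega⟩ = 1) := by
  subst hd hp
  have hN₀ : 0 < N := by omega
  have hq : q < 1 := hqle.trans_lt
    (Real.rpow_lt_one_of_one_lt_of_neg (by exact_mod_cast hN) (by norm_num))
  have hextinct := P.measure_forall_aliveCount_pos_eq_zero hq
    (straddlingPairs_hereditary hN₀) straddlingPairs_separated (by norm_num)
    (card_straddlingPairs_mul_pow_le hN₀ (natCast_mul_ofReal_sq_le_one hN₀ hqle))
  refine ae_iff.mpr (measure_mono_null ?_ hextinct)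
  intro ω hω n
  obtain ⟨C, hCF, hC, ⟨x, hx, hx₀⟩, ⟨y, hy, hy₀⟩⟩ := not_not.mp hω
  have hxk : (N : ℝ) ^ (n + 1) * x 0 < (N ^ n : ℕ) := by
    rw [show x 0 = 0 from hx₀, mul_zero]
    exact_mod_cast pow_pos hN₀ n
  have hyk : ((N ^ n : ℕ) : ℝ) + 1 ≤ N ^ (n + 1) * y 0 := by
    rw [show y 0 = 1 from hy₀, mul_one]
    exact_mod_cast Nat.pow_lt_pow_succ hN
  obtain ⟨c, c', hc, hc', hcc', hv, hv'⟩ := Perc.exists_kept_touching_of_isPreconnected hN₀ hC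
    (hCF.trans (Set.iInter_subset _ (n + 1))) 0 hx hy hxk hyk
  exact Perc.aliveCount_pos_iff.mpr
    ⟨(c, c'), mem_straddlingPairs_of_digitValue hN hv hv' hcc', hc, hc'⟩

end
end
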